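/- For every γ > 0, (1/(4·√(2π)))·∫_0^∞ (1 − e^{−γ·τ})·e^{−τ/4}·(1 − e^{−τ/2})^{-3/2} dτ = 2^{-1/2}·Γ(2γ + 1/2)/Γ(2γ), where Γ is the Gamma function. -/

import Mathlib

open Real MeasureTheory

/-- The Lévy jump rate density of the inverse local time at zero of the
Ornstein–Uhlenbeck process. -/
noncomputable def Rrate (τ : ℝ) : ℝ :=
  (1 / (4 * Real.sqrt (2 * Real.pi))) * Real.exp (-τ/4) * (1 - Real.exp (-τ/2)) ^ (-(3:ℝ)/2)

/-!
`Rrate` is minus the derivative of `Rtail τ = e^{-τ/4} (1 - e^{-τ/2})^{-1/2} / √(2π)`, so an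
integration by parts turns `∫ (1 - e^{-γτ}) Rrate` into `γ ∫ e^{-γτ} Rtail`; the boundary terms
vanish because `1 - e^{-γτ} ≤ max 1 (2γ) (1 - e^{-τ/2})`. The substitution `u = e^{-τ/2}` turns
`∫ e^{-γτ} Rtail` into the Beta integral `2 B(2γ + 1/2, 1/2) / √(2π)`, and `Γ(1/2) = √π`,
`Γ(2γ + 1) = 2γ Γ(2γ)` give the closed form.
-/

open Set Filter Topology

section Beta

variable {a b : ℝ}

lemma re_betaIntegrand_eq {x : ℝ} (hx : x ∈ Ioo (0:ℝ) 1) :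
    ((x : ℂ) ^ ((a : ℂ) - 1) * (1 - (x : ℂ)) ^ ((b : ℂ) - 1)).re =
      x ^ (a - 1) * (1 - x) ^ (b - 1) := by
  have h1 : (1 : ℂ) - x = ((1 - x : ℝ) : ℂ) := by push_cast; rfl
  have ha : (a : ℂ) - 1 = ((a - 1 : ℝ) : ℂ) := by push_cast; rfl
  have hb : (b : ℂ) - 1 = ((b - 1 : ℝ) : ℂ) := by push_cast; rfl
  rw [h1, ha, hb, ← Complex.ofReal_cpow hx.1.le, ← Complex.ofReal_cpow (sub_pos.2 hx.2).le,
    ← Complex.ofReal_mul, Complex.ofReal_re]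

lemma integrableOn_Ioc_betaIntegrand (ha : 0 < a) (hb : 0 < b) :
    IntegrableOn (fun x : ℝ => (x : ℂ) ^ ((a : ℂ) - 1) * (1 - (x : ℂ)) ^ ((b : ℂ) - 1))
      (Ioc 0 1) :=
  (intervalIntegrable_iff_integrableOn_Ioc_of_le zero_le_one).1 <|
    Complex.betaIntegral_convergent (by simpa) (by simpa)

lemma integrableOn_rpow_mul_one_sub_rpow (ha : 0 < a) (hb : 0 < b) :
    IntegrableOn (fun x : ℝ => x ^ (a - 1) * (1 - x) ^ (b - 1)) (Ioo 0 1) :=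
  IntegrableOn.congr_fun ((integrableOn_Ioc_betaIntegrand ha hb).mono_set Ioo_subset_Ioc_self).re
    (fun _ hx => re_betaIntegrand_eq hx) measurableSet_Ioo

lemma integral_rpow_mul_one_sub_rpow (ha : 0 < a) (hb : 0 < b) :
    ∫ x in Ioo (0:ℝ) 1, x ^ (a - 1) * (1 - x) ^ (b - 1) = Gamma a * Gamma b / Gamma (a + b) := by
  have hB := Complex.betaIntegral_eq_Gamma_mul_div (u := a) (v := b) (by simpa) (by simpa)
  rw [Complex.betaIntegral, intervalIntegral.integral_of_le zero_le_one,
    integral_Ioc_eq_integral_Ioo] at hB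
  calc ∫ x in Ioo (0:ℝ) 1, x ^ (a - 1) * (1 - x) ^ (b - 1)
      = ∫ x in Ioo (0:ℝ) 1, RCLike.re ((x : ℂ) ^ ((a : ℂ) - 1) * (1 - (x : ℂ)) ^ ((b : ℂ) - 1)) :=
        setIntegral_congr_fun measurableSet_Ioo fun _ hx => (re_betaIntegrand_eq hx).symm
    _ = (Complex.Gamma a * Complex.Gamma b / Complex.Gamma (a + b)).re := by
        rw [integral_re ((integrableOn_Ioc_betaIntegrand ha hb).mono_set Ioo_subset_Ioc_self), hB]
        rfl
    _ = Gamma a * Gamma b / Gamma (a + b) := by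
        rw [← Complex.ofReal_add, Complex.Gamma_ofReal, Complex.Gamma_ofReal, Complex.Gamma_ofReal]
        norm_cast

end Beta

section ExpBeta

variable {a b c : ℝ}

lemma image_exp_neg_mul_Ioi (hc : 0 < c) : (fun τ => exp (-c * τ)) '' Ioi 0 = Ioo 0 1 := by
  ext u
  constructor
  · rintro ⟨τ, hτ, rfl⟩
    exact ⟨exp_pos _, exp_lt_one_iff.2 (by nlinarith [mem_Ioi.1 hτ])⟩
  · rintro ⟨hu0, hu1⟩
    refine ⟨-log u / c, div_pos (neg_pos.2 (log_neg hu0 hu1)) hc, ?_⟩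
    dsimp only
    rw [neg_mul, mul_div_cancel₀ _ hc.ne', neg_neg, exp_log hu0]

lemma injOn_exp_neg_mul (hc : 0 < c) : InjOn (fun τ => exp (-c * τ)) (Ioi 0) :=
  fun _ _ _ _ h => by simpa [hc.ne'] using exp_injective h

lemma hasDerivAt_exp_neg_mul (τ : ℝ) :
    HasDerivAt (fun τ => exp (-c * τ)) (-c * exp (-c * τ)) τ := by
  simpa [mul_comm] using ((hasDerivAt_id τ).const_mul (-c)).exp

lemma abs_deriv_smul_betaIntegrand (hc : 0 < c) (τ : ℝ) :
    |-c * exp (-c * τ)| • ((exp (-c * τ)) ^ (a / c - 1) * (1 - exp (-c * τ)) ^ (b - 1)) =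
      c * (exp (-a * τ) * (1 - exp (-c * τ)) ^ (b - 1)) := by
  rw [smul_eq_mul, abs_mul, abs_neg, abs_of_pos hc, abs_of_pos (exp_pos _), ← exp_mul]
  rw [show exp (-a * τ) = exp (-c * τ) * exp (-c * τ * (a / c - 1)) by
    rw [← exp_add]; congr 1; field_simp; ring]
  ring

lemma integrableOn_exp_mul_one_sub_exp_rpow (hc : 0 < c) (ha : 0 < a) (hb : 0 < b) :
    IntegrableOn (fun τ => exp (-a * τ) * (1 - exp (-c * τ)) ^ (b - 1)) (Ioi 0) := by
  have h := (integrableOn_image_iff_integrableOn_abs_deriv_smul measurableSet_Ioi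
    (fun τ _ => (hasDerivAt_exp_neg_mul τ).hasDerivWithinAt) (injOn_exp_neg_mul hc)
    (fun u => u ^ (a / c - 1) * (1 - u) ^ (b - 1))).1
  rw [image_exp_neg_mul_Ioi hc] at h
  have := (h (integrableOn_rpow_mul_one_sub_rpow (div_pos ha hc) hb)).const_mul c⁻¹
  simp only [abs_deriv_smul_betaIntegrand hc, ← mul_assoc, inv_mul_cancel₀ hc.ne', one_mul] at this
  exact this

lemma integral_exp_mul_one_sub_exp_rpow (hc : 0 < c) (ha : 0 < a) (hb : 0 < b) :
    ∫ τ in Ioi 0, exp (-a * τ) * (1 - exp (-c * τ)) ^ (b - 1) =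
      Gamma (a / c) * Gamma b / Gamma (a / c + b) / c := by
  have h := integral_image_eq_integral_abs_deriv_smul measurableSet_Ioi
    (fun τ _ => (hasDerivAt_exp_neg_mul τ).hasDerivWithinAt) (injOn_exp_neg_mul hc)
    (fun u => u ^ (a / c - 1) * (1 - u) ^ (b - 1))
  rw [image_exp_neg_mul_Ioi hc, integral_rpow_mul_one_sub_rpow (div_pos ha hc) hb] at h
  simp only [abs_deriv_smul_betaIntegrand hc, integral_const_mul] at h
  rw [h, mul_div_cancel_left₀ _ hc.ne']

end ExpBeta

lemma one_sub_rpow_le_max_mul {u s : ℝ} (hu0 : 0 < u) (hu1 : u ≤ 1) :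
    1 - u ^ s ≤ max 1 s * (1 - u) := by
  rcases le_total s 1 with hs | hs
  · have : u ≤ u ^ s := by simpa using rpow_le_rpow_of_exponent_ge hu0 hu1 hs
    nlinarith [le_max_left 1 s]
  · have h := one_add_mul_self_le_rpow_one_add (s := u - 1) (by linarith) hs
    rw [add_sub_cancel] at h
    rw [max_eq_right hs]
    linarith

lemma one_sub_exp_neg_mul_le (γ : ℝ) {τ : ℝ} (hτ : 0 ≤ τ) :
    1 - exp (-γ * τ) ≤ max 1 (2 * γ) * (1 - exp (-τ / 2)) := by
  have h := one_sub_rpow_le_max_mul (s := 2 * γ) (exp_pos (-τ / 2))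
    (exp_le_one_iff.2 (by linarith))
  rwa [← exp_mul, show -τ / 2 * (2 * γ) = -γ * τ by ring] at h

lemma one_sub_exp_neg_half_pos {τ : ℝ} (hτ : 0 < τ) : 0 < 1 - exp (-τ / 2) :=
  sub_pos.2 (exp_lt_one_iff.2 (by linarith))

lemma one_sub_exp_neg_mul_mul_rpow_le (γ p : ℝ) {τ : ℝ} (hτ : 0 < τ) :
    (1 - exp (-γ * τ)) * (1 - exp (-τ / 2)) ^ p ≤
      max 1 (2 * γ) * (1 - exp (-τ / 2)) ^ (p + 1) := by
  have hpos := one_sub_exp_neg_half_pos hτ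
  rw [rpow_add_one hpos.ne', mul_comm _ (1 - exp (-τ / 2)), ← mul_assoc]
  exact mul_le_mul_of_nonneg_right (one_sub_exp_neg_mul_le γ hτ.le) (rpow_nonneg hpos.le _)

lemma one_sub_exp_neg_mul_nonneg {γ τ : ℝ} (hγ : 0 ≤ γ) (hτ : 0 ≤ τ) : 0 ≤ 1 - exp (-γ * τ) :=
  sub_nonneg.2 (exp_le_one_iff.2 (by nlinarith))

/-- `Rtail τ = ∫ σ in Ioi τ, Rrate σ`, the tail of the Lévy measure. -/
noncomputable def Rtail (τ : ℝ) : ℝ :=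
  exp (-τ / 4) * (1 - exp (-τ / 2)) ^ (-(1:ℝ) / 2) / √(2 * π)

lemma hasDerivAt_Rtail {τ : ℝ} (hτ : 0 < τ) : HasDerivAt Rtail (-Rrate τ) τ := by
  have hne := (one_sub_exp_neg_half_pos hτ).ne'
  have hA : HasDerivAt (fun t : ℝ => exp (-t / 4)) (exp (-τ / 4) * (-1 / 4)) τ :=
    ((hasDerivAt_id τ).neg.div_const 4).exp
  have hB : HasDerivAt (fun t : ℝ => 1 - exp (-t / 2)) (-(exp (-τ / 2) * (-1 / 2))) τ :=
    (((hasDerivAt_id τ).neg.div_const 2).exp).const_sub 1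
  refine ((hA.mul (hB.rpow_const (p := -(1:ℝ) / 2) (Or.inl hne))).div_const √(2 * π)).congr_deriv ?_
  -- `(1 - e)^(-1/2) = (1 - e)^(-3/2) * (1 - e)`, and the two terms combine since `(1 - e) + e = 1`
  rw [show -(1:ℝ) / 2 - 1 = -(3:ℝ) / 2 by norm_num, show -(1:ℝ) / 2 = -(3:ℝ) / 2 + 1 by norm_num,
    rpow_add_one hne, Rrate]
  field_simp
  ring

lemma integral_one_sub_exp_mul_eq_mul_integral_exp_mul {R T : ℝ → ℝ} {γ : ℝ}
    (hT : ∀ τ ∈ Ioi (0:ℝ), HasDerivAt T (-R τ) τ)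
    (hR : IntegrableOn (fun τ => (1 - exp (-γ * τ)) * R τ) (Ioi 0))
    (hT_int : IntegrableOn (fun τ => exp (-γ * τ) * T τ) (Ioi 0))
    (h_zero : Tendsto (fun τ => (1 - exp (-γ * τ)) * T τ) (𝓝[>] 0) (𝓝 0))
    (h_infty : Tendsto (fun τ => (1 - exp (-γ * τ)) * T τ) atTop (𝓝 0)) :
    ∫ τ in Ioi 0, (1 - exp (-γ * τ)) * R τ = γ * ∫ τ in Ioi 0, exp (-γ * τ) * T τ := by
  have hu : ∀ τ ∈ Ioi (0:ℝ), HasDerivAt (fun τ => 1 - exp (-γ * τ)) (γ * exp (-γ * τ)) τ :=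
    fun τ _ => by simpa using (hasDerivAt_exp_neg_mul (c := γ) τ).const_sub 1
  have h := integral_Ioi_mul_deriv_eq_deriv_mul hu hT (hR.neg.congr_fun (fun τ _ => by simp)
    measurableSet_Ioi) (IntegrableOn.congr_fun (hT_int.const_mul γ)
    (fun τ _ => by simp [mul_assoc]) measurableSet_Ioi) h_zero h_infty
  simp only [mul_neg, integral_neg, mul_assoc, integral_const_mul, sub_self, zero_sub] at h
  linarith

lemma exp_neg_mul_mul_Rtail (γ τ : ℝ) :
    exp (-γ * τ) * Rtail τ =
      (√(2 * π))⁻¹ * (exp (-(γ + 1 / 4) * τ) * (1 - exp (-(1 / 2) * τ)) ^ ((1 / 2 : ℝ) - 1)) := by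
  rw [Rtail, show (1 / 2 : ℝ) - 1 = -1 / 2 by norm_num, show -(1 / 2) * τ = -τ / 2 by ring,
    show -(γ + 1 / 4) * τ = -γ * τ + -τ / 4 by ring, exp_add]
  ring

lemma integrableOn_exp_neg_mul_mul_Rtail {γ : ℝ} (hγ : -1 / 4 < γ) :
    IntegrableOn (fun τ => exp (-γ * τ) * Rtail τ) (Ioi 0) := by
  simp only [exp_neg_mul_mul_Rtail]
  refine (integrableOn_exp_mul_one_sub_exp_rpow ?_ ?_ ?_).const_mul _ <;> linarith

lemma integral_exp_neg_mul_mul_Rtail {γ : ℝ} (hγ : -1 / 4 < γ) :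
    ∫ τ in Ioi 0, exp (-γ * τ) * Rtail τ = √2 * Gamma (2 * γ + 1 / 2) / Gamma (2 * γ + 1) := by
  simp only [exp_neg_mul_mul_Rtail, integral_const_mul]
  rw [integral_exp_mul_one_sub_exp_rpow (by norm_num) (by linarith) (by norm_num),
    show (γ + 1 / 4) / (1 / 2) = 2 * γ + 1 / 2 by ring,
    show 2 * γ + 1 / 2 + 1 / 2 = 2 * γ + 1 by ring, Gamma_one_half_eq,
    sqrt_mul zero_le_two]
  have : 0 < √π := sqrt_pos.2 pi_pos
  have : 0 < √2 := by positivity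
  field_simp
  rw [sq_sqrt zero_le_two]

lemma integrableOn_Rtail : IntegrableOn Rtail (Ioi 0) := by
  simpa using integrableOn_exp_neg_mul_mul_Rtail (γ := 0) (by norm_num)

lemma Rtail_nonneg {τ : ℝ} (hτ : 0 < τ) : 0 ≤ Rtail τ := by
  have := one_sub_exp_neg_half_pos hτ
  unfold Rtail
  positivity

lemma one_sub_exp_neg_mul_mul_Rrate_le (γ : ℝ) {τ : ℝ} (hτ : 0 < τ) :
    (1 - exp (-γ * τ)) * Rrate τ ≤ max 1 (2 * γ) / 4 * Rtail τ := by
  calc (1 - exp (-γ * τ)) * Rrate τ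
      = exp (-τ / 4) / (4 * √(2 * π)) *
          ((1 - exp (-γ * τ)) * (1 - exp (-τ / 2)) ^ (-(3:ℝ) / 2)) := by
        rw [Rrate]; ring
    _ ≤ exp (-τ / 4) / (4 * √(2 * π)) * (max 1 (2 * γ) * (1 - exp (-τ / 2)) ^ (-(3:ℝ) / 2 + 1)) :=
        mul_le_mul_of_nonneg_left (one_sub_exp_neg_mul_mul_rpow_le γ _ hτ) (by positivity)
    _ = max 1 (2 * γ) / 4 * Rtail τ := by
        rw [Rtail, show -(3:ℝ) / 2 + 1 = -1 / 2 by norm_num]; ring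

lemma one_sub_exp_neg_mul_mul_Rtail_le (γ : ℝ) {τ : ℝ} (hτ : 0 < τ) :
    (1 - exp (-γ * τ)) * Rtail τ ≤
      max 1 (2 * γ) / √(2 * π) * (exp (-τ / 4) * √(1 - exp (-τ / 2))) := by
  calc (1 - exp (-γ * τ)) * Rtail τ
      = exp (-τ / 4) / √(2 * π) * ((1 - exp (-γ * τ)) * (1 - exp (-τ / 2)) ^ (-(1:ℝ) / 2)) := by
        rw [Rtail]; ring
    _ ≤ exp (-τ / 4) / √(2 * π) * (max 1 (2 * γ) * (1 - exp (-τ / 2)) ^ (-(1:ℝ) / 2 + 1)) :=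
        mul_le_mul_of_nonneg_left (one_sub_exp_neg_mul_mul_rpow_le γ _ hτ) (by positivity)
    _ = max 1 (2 * γ) / √(2 * π) * (exp (-τ / 4) * √(1 - exp (-τ / 2))) := by
        rw [sqrt_eq_rpow (1 - exp (-τ / 2)), show -(1:ℝ) / 2 + 1 = 1 / 2 by norm_num]; ring

lemma integrableOn_one_sub_exp_neg_mul_mul_Rrate {γ : ℝ} (hγ : 0 ≤ γ) :
    IntegrableOn (fun τ => (1 - exp (-γ * τ)) * Rrate τ) (Ioi 0) := by
  refine Integrable.mono' (integrableOn_Rtail.const_mul (max 1 (2 * γ) / 4)) ?_ ?_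
  · exact (by unfold Rrate; fun_prop : Measurable _).aestronglyMeasurable
  · filter_upwards [ae_restrict_mem measurableSet_Ioi] with τ hτ
    have hR : 0 ≤ Rrate τ := by
      have := one_sub_exp_neg_half_pos hτ
      unfold Rrate
      positivity
    rw [norm_of_nonneg (mul_nonneg (one_sub_exp_neg_mul_nonneg hγ (le_of_lt hτ)) hR)]
    exact one_sub_exp_neg_mul_mul_Rrate_le γ hτ

lemma tendsto_one_sub_exp_neg_mul_mul_Rtail {γ : ℝ} (hγ : 0 ≤ γ) {l : Filter ℝ} (hl : Ioi 0 ∈ l)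
    (h : Tendsto (fun τ => exp (-τ / 4) * √(1 - exp (-τ / 2))) l (𝓝 0)) :
    Tendsto (fun τ => (1 - exp (-γ * τ)) * Rtail τ) l (𝓝 0) := by
  have hbound := h.const_mul (max 1 (2 * γ) / √(2 * π))
  rw [mul_zero] at hbound
  refine squeeze_zero' ?_ ?_ hbound
  · filter_upwards [hl] with τ hτ
    exact mul_nonneg (one_sub_exp_neg_mul_nonneg hγ (le_of_lt hτ)) (Rtail_nonneg hτ)
  · filter_upwards [hl] with τ hτ
    exact one_sub_exp_neg_mul_mul_Rtail_le γ hτ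

lemma tendsto_exp_mul_sqrt_nhdsGT_zero :
    Tendsto (fun τ : ℝ => exp (-τ / 4) * √(1 - exp (-τ / 2))) (𝓝[>] 0) (𝓝 0) := by
  have h : Continuous (fun τ : ℝ => exp (-τ / 4) * √(1 - exp (-τ / 2))) := by fun_prop
  simpa using (h.tendsto 0).mono_left nhdsWithin_le_nhds

lemma tendsto_exp_mul_sqrt_atTop :
    Tendsto (fun τ : ℝ => exp (-τ / 4) * √(1 - exp (-τ / 2))) atTop (𝓝 0) := by
  have hexp {c : ℝ} (hc : 0 < c) : Tendsto (fun τ : ℝ => exp (-τ / c)) atTop (𝓝 0) := by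
    refine (tendsto_exp_neg_atTop_nhds_zero.comp (tendsto_id.atTop_div_const hc)).congr fun τ => ?_
    simp [neg_div]
  simpa using (hexp four_pos).mul (((hexp two_pos).const_sub 1).sqrt)

theorem stmt17 :
    ∀ γ > (0:ℝ),
      (∫ τ in Set.Ioi (0:ℝ), (1 - Real.exp (-γ * τ)) * Rrate τ) =
        2 ^ (-(1:ℝ)/2) * Real.Gamma (2 * γ + 1/2) / Real.Gamma (2 * γ) := by
  intro γ hγ
  rw [integral_one_sub_exp_mul_eq_mul_integral_exp_mul (fun τ hτ => hasDerivAt_Rtail hτ)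
    (integrableOn_one_sub_exp_neg_mul_mul_Rrate hγ.le)
    (integrableOn_exp_neg_mul_mul_Rtail (by linarith))
    (tendsto_one_sub_exp_neg_mul_mul_Rtail hγ.le self_mem_nhdsWithin
      tendsto_exp_mul_sqrt_nhdsGT_zero)
    (tendsto_one_sub_exp_neg_mul_mul_Rtail hγ.le (Ioi_mem_atTop 0) tendsto_exp_mul_sqrt_atTop),
    integral_exp_neg_mul_mul_Rtail (by linarith), Gamma_add_one (by positivity),
    show (-(1:ℝ) / 2) = -(1 / 2) by norm_num, rpow_neg zero_le_two, ← sqrt_eq_rpow]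
  have : 0 < √2 := by positivity
  have : 0 < Gamma (2 * γ) := Gamma_pos_of_pos (by positivity)
  field_simp
  rw [sq_sqrt zero_le_two]
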